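/- arXiv:2104.00502 — 3 statements merged into one kernel-verified Lean document; each statement's English description precedes it below -/
import Mathlib

section
/- Suppose a is a Barker sequence of even length n ≥ 4 such that C_1(a) = C_3(a) = ⋯ = C_{n/2−1}(a) (all the aperiodic autocorrelations at odd shifts below n/2 are equal). Then n = 4. -/
/-!
Write `n = 2 * M`, `C k = aperiodicCorr a n k` and `ε = C 1`. A product of `±1`'s is determined
modulo 4 by their sum. Applied to the product of the first and the last `t` entries of `a`, which
is the product of the terms of `C (n - t)`, this gives `C k = 0` for even `k`, `4 ∣ n`,
`C (n - k) = -C k` for odd `k`, and `a t * a (n + 1 - t) ≡ C (n - t) + C (n + 1 - t) + 2 - 2 t`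
modulo 4. So the odd correlations are `ε` below `M` and `-ε` above it, and the last congruence
becomes the twisted symmetry `a (n + 1 - t) = ε (-1)^t a t` for `t ≤ M`.

Let `B x = ∑_{j ≤ M} a j x^j`. By the symmetry the second half of `a` contributes `ε x B x` at
`x = ±i`, while `F i * F (-i) = n` for `F x = ∑_{j ≤ n} a j x^j`, since every correlation term
`C k (i^k + (-i)^k)` vanishes; hence `B i * B (-i) = M`. The symmetry also makes each odd
correlation equal to its part straddling the midpoint, so multiplying `B` by the second half of `a`
at `x = ±i` expresses `B i * B (-i)` through the known values of `C k`: it is `2` if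
`M ≡ 2 [MOD 4]` and `0` otherwise. Hence `M = 2`.
-/

/-- The `k`th aperiodic autocorrelation of the sequence `a` of length `n`:
`C_k(a) = ∑_{j=1}^{n-k} a_j a_{j+k}`. -/
def aperiodicCorr (a : ℕ → ℤ) (n k : ℕ) : ℤ :=
  ∑ j ∈ Finset.Icc 1 (n - k), a j * a (j + k)

open Finset

lemma Int.eq_of_isUnit_of_modEq_four {u v : ℤ} (hu : IsUnit u) (hv : IsUnit v)
    (h : u ≡ v [ZMOD 4]) : u = v := by
  rcases Int.isUnit_iff.mp hu with rfl | rfl <;> rcases Int.isUnit_iff.mp hv with rfl | rfl <;>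
    first | rfl | exact absurd h (by decide)

lemma Int.mul_modEq_four_of_isUnit {u v : ℤ} (hu : IsUnit u) (hv : IsUnit v) :
    u * v ≡ u + v - 1 [ZMOD 4] := by
  rcases Int.isUnit_iff.mp hu with rfl | rfl <;> rcases Int.isUnit_iff.mp hv with rfl | rfl <;>
    decide

lemma Int.prod_modEq_four_of_isUnit {ι : Type*} (s : Finset ι) (f : ι → ℤ)
    (hf : ∀ i ∈ s, IsUnit (f i)) : ∏ i ∈ s, f i ≡ 1 - #s + ∑ i ∈ s, f i [ZMOD 4] := by
  classical
  induction s using Finset.induction_on with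
  | empty => simp [Int.ModEq.refl]
  | insert x s hx ih =>
    have hs : ∀ i ∈ s, IsUnit (f i) := fun i hi => hf i (mem_insert_of_mem hi)
    rw [prod_insert hx, sum_insert hx, card_insert_of_notMem hx]
    calc f x * ∏ i ∈ s, f i ≡ f x + ∏ i ∈ s, f i - 1 [ZMOD 4] :=
          Int.mul_modEq_four_of_isUnit (hf x (mem_insert_self x s)) (IsUnit.prod_iff.mpr hs)
      _ ≡ f x + (1 - #s + ∑ i ∈ s, f i) - 1 [ZMOD 4] := ((ih hs).add_left _).sub_right _
      _ = 1 - ↑(#s + 1) + (f x + ∑ i ∈ s, f i) := by push_cast; ring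

@[to_additive]
lemma prod_Icc_mul_prod_Icc_succ {M : Type*} [CommMonoid M] (f : ℕ → M) {m n : ℕ} (h : m ≤ n) :
    (∏ j ∈ Icc 1 m, f j) * ∏ j ∈ Icc (m + 1) n, f j = ∏ j ∈ Icc 1 n, f j := by
  rw [Icc_add_one_left_eq_Ioc, ← zero_add 1, Icc_add_one_left_eq_Ioc, Icc_add_one_left_eq_Ioc,
    prod_Ioc_consecutive f (Nat.zero_le m) h]

section EndsProd

variable {a : ℕ → ℤ} {n t : ℕ}

def endsProd (a : ℕ → ℤ) (n t : ℕ) : ℤ :=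
  (∏ j ∈ Icc 1 t, a j) * ∏ j ∈ Icc (n + 1 - t) n, a j

lemma endsProd_eq_prod (ht : t ≤ n) :
    endsProd a n t = ∏ j ∈ Icc 1 t, a j * a (j + (n - t)) := by
  have hshift : Icc (n + 1 - t) n = (Icc 1 t).map (addRightEmbedding (n - t)) := by
    rw [map_add_right_Icc]
    congr 1 <;> omega
  rw [prod_mul_distrib, endsProd, hshift, prod_map]
  rfl

lemma endsProd_modEq (ha : ∀ j ∈ Icc 1 n, IsUnit (a j)) (ht : t ≤ n) :
    endsProd a n t ≡ 1 - t + aperiodicCorr a n (n - t) [ZMOD 4] := by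
  have hunit : ∀ j ∈ Icc 1 t, IsUnit (a j * a (j + (n - t))) := by
    intro j hj
    simp only [mem_Icc] at hj
    exact (ha j (by simp; omega)).mul (ha _ (by simp; omega))
  rw [endsProd_eq_prod ht, aperiodicCorr, Nat.sub_sub_self ht]
  simpa using Int.prod_modEq_four_of_isUnit _ _ hunit

lemma isUnit_endsProd (ha : ∀ j ∈ Icc 1 n, IsUnit (a j)) (ht : t ≤ n) :
    IsUnit (endsProd a n t) := by
  refine (IsUnit.prod_iff.mpr fun j hj => ha j ?_).mul (IsUnit.prod_iff.mpr fun j hj => ha j ?_)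
    <;> simp only [mem_Icc] at hj ⊢ <;> omega

lemma endsProd_succ (ht : t < n) :
    endsProd a n (t + 1) = endsProd a n t * (a (t + 1) * a (n - t)) := by
  rw [endsProd, endsProd, prod_Icc_succ_top (by omega), show n + 1 - (t + 1) = n - t by omega,
    show n + 1 - t = n - t + 1 by omega, ← insert_Icc_add_one_left_eq_Icc (by omega : n - t ≤ n),
    prod_insert (by simp)]
  ring

lemma endsProd_mul_endsProd_sub (ht : t ≤ n) :
    endsProd a n t * endsProd a n (n - t) = (∏ j ∈ Icc 1 n, a j) ^ 2 := by
  rw [endsProd, endsProd, show n + 1 - (n - t) = t + 1 by omega,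
    show n + 1 - t = n - t + 1 by omega, sq]
  nth_rw 1 [← prod_Icc_mul_prod_Icc_succ a ht]
  rw [← prod_Icc_mul_prod_Icc_succ a (Nat.sub_le n t)]
  ring

end EndsProd

section Correlation

variable {a : ℕ → ℤ} {n k : ℕ}

lemma aperiodicCorr_self : aperiodicCorr a n n = 0 := by
  simp [aperiodicCorr]

lemma aperiodicCorr_modEq_two (ha : ∀ j ∈ Icc 1 n, IsUnit (a j)) (hk : k ≤ n) :
    aperiodicCorr a n k ≡ n - k [ZMOD 2] := by
  have h := endsProd_modEq ha (Nat.sub_le n k)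
  rw [Nat.sub_sub_self hk] at h
  rcases Int.isUnit_iff.mp (isUnit_endsProd ha (Nat.sub_le n k)) with h1 | h1 <;>
    rw [h1] at h <;> unfold Int.ModEq at * <;> push_cast [hk] at * <;> omega

lemma aperiodicCorr_sub_modEq (ha : ∀ j ∈ Icc 1 n, IsUnit (a j)) (hk : k ≤ n) :
    aperiodicCorr a n k - aperiodicCorr a n (n - k) ≡ n - 2 * k [ZMOD 4] := by
  have h1 := endsProd_modEq ha (Nat.sub_le n k)
  have h2 := endsProd_modEq ha hk
  rw [Nat.sub_sub_self hk] at h1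
  have hsq : (∏ j ∈ Icc 1 n, a j) ^ 2 = 1 := Int.isUnit_sq (IsUnit.prod_iff.mpr ha)
  rw [← Int.eq_of_mul_eq_one ((endsProd_mul_endsProd_sub hk).trans hsq)] at h1
  unfold Int.ModEq at *
  push_cast [hk] at *
  omega

lemma mul_reflect_modEq (ha : ∀ j ∈ Icc 1 n, IsUnit (a j)) {t : ℕ} (ht : 1 ≤ t) (htn : t ≤ n) :
    a t * a (n + 1 - t) ≡
      aperiodicCorr a n (n - t) + aperiodicCorr a n (n + 1 - t) + 2 - 2 * t [ZMOD 4] := by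
  obtain ⟨s, rfl⟩ : ∃ s, t = s + 1 := ⟨t - 1, by omega⟩
  have hs := isUnit_endsProd ha (t := s) (by omega)
  have hprod : a (s + 1) * a (n + 1 - (s + 1)) = endsProd a n (s + 1) * endsProd a n s := by
    rw [endsProd_succ (by omega), show n + 1 - (s + 1) = n - s by omega, mul_comm _ (_ * _),
      mul_assoc, Int.isUnit_mul_self hs, mul_one]
  rw [hprod, show n + 1 - (s + 1) = n - s by omega]
  calc endsProd a n (s + 1) * endsProd a n s
      ≡ endsProd a n (s + 1) + endsProd a n s - 1 [ZMOD 4] :=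
        Int.mul_modEq_four_of_isUnit (isUnit_endsProd ha htn) hs
    _ ≡ (1 - ↑(s + 1) + aperiodicCorr a n (n - (s + 1)))
          + (1 - s + aperiodicCorr a n (n - s)) - 1 [ZMOD 4] :=
        ((endsProd_modEq ha htn).add (endsProd_modEq ha (by omega))).sub_right _
    _ = _ := by push_cast; ring

end Correlation

section EvenBarker

variable {a : ℕ → ℤ} {n k : ℕ}

lemma aperiodicCorr_eq_zero_of_even (ha : ∀ j ∈ Icc 1 n, IsUnit (a j))
    (hb : ∀ k, 1 ≤ k → k ≤ n - 1 → aperiodicCorr a n k ∈ ({-1, 0, 1} : Set ℤ))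
    (hn : Even n) (hk : Even k) (hk1 : 1 ≤ k) (hkn : k ≤ n) : aperiodicCorr a n k = 0 := by
  rcases hkn.eq_or_lt with rfl | hlt
  · exact aperiodicCorr_self
  have hpar := aperiodicCorr_modEq_two ha hkn
  have hc := hb k hk1 (by omega)
  obtain ⟨r, rfl⟩ := hk
  obtain ⟨m, rfl⟩ := hn
  simp only [Set.mem_insert_iff, Set.mem_singleton_iff, Int.ModEq] at hc hpar
  push_cast [hkn] at hpar
  omega

lemma isUnit_aperiodicCorr_of_odd (ha : ∀ j ∈ Icc 1 n, IsUnit (a j))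
    (hb : ∀ k, 1 ≤ k → k ≤ n - 1 → aperiodicCorr a n k ∈ ({-1, 0, 1} : Set ℤ))
    (hn : Even n) (hk : Odd k) (hkn : k ≤ n) : IsUnit (aperiodicCorr a n k) := by
  have hpar := aperiodicCorr_modEq_two ha hkn
  obtain ⟨r, rfl⟩ := hk
  obtain ⟨m, rfl⟩ := hn
  have hc := hb (2 * r + 1) (by omega) (by omega)
  simp only [Set.mem_insert_iff, Set.mem_singleton_iff, Int.ModEq] at hc hpar
  push_cast [hkn] at hpar
  exact Int.isUnit_iff.mpr (by omega)

lemma four_dvd_of_even (ha : ∀ j ∈ Icc 1 n, IsUnit (a j))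
    (hb : ∀ k, 1 ≤ k → k ≤ n - 1 → aperiodicCorr a n k ∈ ({-1, 0, 1} : Set ℤ))
    (hn : Even n) (h4 : 4 ≤ n) : 4 ∣ n := by
  have h := aperiodicCorr_sub_modEq ha (k := 2) (by omega)
  rw [aperiodicCorr_eq_zero_of_even ha hb hn even_two (by norm_num) (by omega),
    aperiodicCorr_eq_zero_of_even ha hb hn (hn.tsub even_two) (by omega) (by omega)] at h
  have := Int.ModEq.dvd h.symm
  omega

lemma aperiodicCorr_sub_of_odd (ha : ∀ j ∈ Icc 1 n, IsUnit (a j))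
    (hb : ∀ k, 1 ≤ k → k ≤ n - 1 → aperiodicCorr a n k ∈ ({-1, 0, 1} : Set ℤ))
    (h4 : 4 ∣ n) (hk : Odd k) (hkn : k ≤ n) :
    aperiodicCorr a n (n - k) = -aperiodicCorr a n k := by
  have hn : Even n := (even_iff_two_dvd.mpr (dvd_trans (by norm_num) h4))
  have h := aperiodicCorr_sub_modEq ha hkn
  have hu := isUnit_aperiodicCorr_of_odd ha hb hn hk hkn
  have hv := isUnit_aperiodicCorr_of_odd ha hb hn (Nat.Even.sub_odd hkn hn hk) (Nat.sub_le n k)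
  obtain ⟨r, rfl⟩ := hk
  rcases Int.isUnit_iff.mp hu with h1 | h1 <;> rcases Int.isUnit_iff.mp hv with h2 | h2 <;>
    rw [h1, h2] at h ⊢ <;> unfold Int.ModEq at h <;> omega

end EvenBarker

section Reflection

variable {a : ℕ → ℤ} {n M : ℕ} {ε : ℤ}

lemma aperiodicCorr_eq_neg_of_odd_of_lt (ha : ∀ j ∈ Icc 1 n, IsUnit (a j))
    (hb : ∀ k, 1 ≤ k → k ≤ n - 1 → aperiodicCorr a n k ∈ ({-1, 0, 1} : Set ℤ))
    (hM : n = 2 * M) (h4 : 4 ∣ n) (hlow : ∀ k, Odd k → k < M → aperiodicCorr a n k = ε)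
    {k : ℕ} (hk : Odd k) (hMk : M < k) (hkn : k ≤ n) : aperiodicCorr a n k = -ε := by
  have hn : Even n := ⟨M, by omega⟩
  have h := aperiodicCorr_sub_of_odd ha hb h4 hk hkn
  rw [hlow (n - k) (Nat.Even.sub_odd hkn hn hk) (by omega)] at h
  omega

lemma apply_reflect_eq (ha : ∀ j ∈ Icc 1 n, IsUnit (a j))
    (hb : ∀ k, 1 ≤ k → k ≤ n - 1 → aperiodicCorr a n k ∈ ({-1, 0, 1} : Set ℤ))
    (hM : n = 2 * M) (h4 : 4 ∣ n) (hlow : ∀ k, Odd k → k < M → aperiodicCorr a n k = ε)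
    (hε : IsUnit ε) {t : ℕ} (ht : 1 ≤ t) (htM : t ≤ M) : a (n + 1 - t) = ε * (-1) ^ t * a t := by
  have hn : Even n := ⟨M, by omega⟩
  have hhigh k := aperiodicCorr_eq_neg_of_odd_of_lt (k := k) ha hb hM h4 hlow
  have hzero k := aperiodicCorr_eq_zero_of_even (k := k) ha hb hn
  -- one of the shifts `n - t`, `n + 1 - t` is odd and above `M`, the other even
  have hsum : aperiodicCorr a n (n - t) + aperiodicCorr a n (n + 1 - t) = -ε := by
    obtain ⟨r, hr⟩ | ⟨r, hr⟩ := Nat.even_or_odd t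
    · rw [hzero _ ⟨M - r, by omega⟩ (by omega) (by omega),
        hhigh _ ⟨M - r, by omega⟩ (by omega) (by omega), zero_add]
    · rw [hhigh _ ⟨M - r - 1, by omega⟩ (by omega) (by omega),
        hzero _ ⟨M - r, by omega⟩ (by omega) (by omega), add_zero]
  have hmod := mul_reflect_modEq ha ht (by omega)
  have hat : IsUnit (a t) := ha t (by simp; omega)
  have hprod : a t * a (n + 1 - t) = ε * (-1) ^ t := by
    refine Int.eq_of_isUnit_of_modEq_four (hat.mul (ha _ (by simp; omega)))
      (hε.mul ((isUnit_neg_one).pow t)) (hmod.trans ?_)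
    rcases Int.isUnit_iff.mp hε with rfl | rfl <;> rcases Nat.even_or_odd t with h | h <;>
      simp only [Int.ModEq, h.neg_one_pow] <;> obtain ⟨r, hr⟩ := h <;> omega
  calc a (n + 1 - t) = a t * (a t * a (n + 1 - t)) := by
        rw [← mul_assoc, Int.isUnit_mul_self hat, one_mul]
    _ = ε * (-1) ^ t * a t := by rw [hprod]; ring

end Reflection

section Regrouping

variable {M : Type*} [AddCommMonoid M]

lemma sum_sum_eq_sum_diag_add_sum_lt (s : Finset ℕ) (g : ℕ → ℕ → M) :
    ∑ j ∈ s, ∑ l ∈ s, g j l = ∑ j ∈ s, g j j + ∑ j ∈ s, ∑ l ∈ s with j < l, (g j l + g l j) := by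
  have htri : ∀ j l, g j l = (if j = l then g j l else 0) + (if j < l then g j l else 0)
      + (if l < j then g j l else 0) := by
    intro j l
    split_ifs <;> simp_all <;> omega
  have hswap : ∑ j ∈ s, ∑ l ∈ s with l < j, g j l = ∑ j ∈ s, ∑ l ∈ s with j < l, g l j :=
    sum_comm' (by intros; simp only [mem_filter]; tauto)
  rw [sum_congr rfl fun j _ => sum_congr rfl fun l _ => htri j l]
  simp only [sum_add_distrib, sum_ite_eq, ← sum_filter, filter_mem_eq_inter, inter_self, hswap,
    add_assoc]

lemma sum_sum_lt_eq_sum_sum_add (n : ℕ) (f : ℕ → ℕ → M) :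
    ∑ j ∈ Icc 1 n, ∑ l ∈ Icc 1 n with j < l, f j l =
      ∑ k ∈ Icc 1 (n - 1), ∑ j ∈ Icc 1 (n - k), f j (j + k) := by
  rw [sum_sigma', sum_sigma']
  refine sum_nbij' (fun p => ⟨p.2 - p.1, p.1⟩) (fun q => ⟨q.2, q.2 + q.1⟩) ?_ ?_ ?_ ?_ ?_
  · simp only [mem_sigma, mem_Icc, mem_filter]; omega
  · simp only [mem_sigma, mem_Icc, mem_filter]; omega
  · rintro ⟨j, l⟩ h
    simp only [mem_sigma, mem_Icc, mem_filter] at h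
    ext <;> simp; omega
  · rintro ⟨k, j⟩ h
    simp
  · rintro ⟨j, l⟩ h
    simp only [mem_sigma, mem_Icc, mem_filter] at h
    simp only
    congr
    omega

end Regrouping

section Evaluation

variable {R : Type*} [CommRing R]

def seqEval (a : ℕ → ℤ) (s : Finset ℕ) (x : R) : R :=
  ∑ j ∈ s, (a j : R) * x ^ j

def crossCorr (a : ℕ → ℤ) (n M k : ℕ) : ℤ :=
  ∑ j ∈ Icc 1 (n - k) with j ≤ M ∧ M < j + k, a j * a (j + k)

lemma pow_mul_pow_add_of_mul_eq_one {x y : R} (hxy : x * y = 1) (j k : ℕ) :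
    x ^ j * y ^ (j + k) = y ^ k := by
  rw [pow_add, ← mul_assoc, ← mul_pow, hxy, one_pow, one_mul]

lemma seqEval_mul_seqEval (a : ℕ → ℤ) (n : ℕ) {x y : R} (hxy : x * y = 1) :
    seqEval a (Icc 1 n) x * seqEval a (Icc 1 n) y =
      ∑ j ∈ Icc 1 n, (a j : R) ^ 2 +
        ∑ k ∈ Icc 1 (n - 1), (aperiodicCorr a n k : R) * (x ^ k + y ^ k) := by
  have hyx : y * x = 1 := by rw [mul_comm, hxy]
  rw [seqEval, seqEval, sum_mul_sum, sum_sum_eq_sum_diag_add_sum_lt, sum_sum_lt_eq_sum_sum_add]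
  congr 1
  · refine sum_congr rfl fun j _ => ?_
    rw [mul_mul_mul_comm, ← mul_pow, hxy, one_pow, mul_one, sq]
  · refine sum_congr rfl fun k _ => ?_
    rw [aperiodicCorr, Int.cast_sum, sum_mul]
    refine sum_congr rfl fun j _ => ?_
    push_cast
    linear_combination (a j : R) * a (j + k) *
      (pow_mul_pow_add_of_mul_eq_one hxy j k + pow_mul_pow_add_of_mul_eq_one hyx j k)

lemma seqEval_mul_seqEval_tail (a : ℕ → ℤ) {n M : ℕ} {x y : R} (hxy : x * y = 1) :
    seqEval a (Icc 1 M) x * seqEval a (Icc (M + 1) n) y =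
      ∑ k ∈ Icc 1 (n - 1), (crossCorr a n M k : R) * y ^ k := by
  set g : ℕ → ℕ → R := fun j l => (a j : R) * x ^ j * ((a l : R) * y ^ l)
  have hpairs : ∑ j ∈ Icc 1 M, ∑ l ∈ Icc (M + 1) n, g j l =
      ∑ j ∈ Icc 1 n, ∑ l ∈ Icc 1 n with j < l, if j ≤ M ∧ M < l then g j l else 0 := by
    symm
    calc _ = ∑ j ∈ Icc 1 n with j ≤ M, ∑ l ∈ Icc (M + 1) n, g j l := by
          rw [sum_filter]
          refine sum_congr rfl fun j _ => ?_
          split_ifs with hjM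
          · rw [sum_ite, sum_const_zero, add_zero, filter_filter]
            exact sum_congr (by ext l; simp only [mem_filter, mem_Icc]; omega) fun _ _ => rfl
          · exact sum_eq_zero fun l _ => if_neg (by omega)
      _ = _ := sum_subset (by intro j; simp only [mem_filter, mem_Icc]; omega) fun j hj hj' => by
          simp only [mem_filter, mem_Icc] at hj hj'
          rw [Icc_eq_empty (by omega), sum_empty]
  rw [seqEval, seqEval, sum_mul_sum, hpairs, sum_sum_lt_eq_sum_sum_add]
  refine sum_congr rfl fun k _ => ?_
  rw [crossCorr, Int.cast_sum, sum_mul, sum_filter]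
  refine sum_congr rfl fun j _ => ?_
  split_ifs
  · simp only [g]
    push_cast
    linear_combination (a j : R) * a (j + k) * pow_mul_pow_add_of_mul_eq_one hxy j k
  · simp

end Evaluation

section Reflected

variable {a : ℕ → ℤ} {n M : ℕ} {ε : ℤ}

lemma neg_one_pow_mul_neg_one_pow_of_odd {i j : ℕ} (h : Odd (i + j)) :
    (-1 : ℤ) ^ i * (-1) ^ j = -1 := by
  rw [← pow_add, h.neg_one_pow]

lemma crossCorr_eq_aperiodicCorr (hM : n = 2 * M) (hε : IsUnit ε)
    (hrefl : ∀ t, 1 ≤ t → t ≤ M → a (n + 1 - t) = ε * (-1) ^ t * a t)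
    {k : ℕ} (hk : Odd k) (hkn : k ≤ n) : crossCorr a n M k = aperiodicCorr a n k := by
  have hεε := Int.isUnit_mul_self hε
  rw [aperiodicCorr, ← sum_filter_add_sum_filter_not _ (fun j => j ≤ M ∧ M < j + k), crossCorr,
    left_eq_add]
  -- the reflection `j ↦ n + 1 - k - j` swaps the two blocks and flips the sign of each term
  refine sum_involution (fun j _ => n + 1 - k - j) (fun j hj => ?_) (fun j hj _ => ?_)
    (fun j hj => ?_) (fun j hj => ?_) <;> simp only [mem_filter, mem_Icc] at hj ⊢
  · rw [show n + 1 - k - j + k = n + 1 - j by omega]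
    rcases le_or_gt (j + k) M with hjk | hMj
    · rw [hrefl j (by omega) (by omega), show n + 1 - k - j = n + 1 - (j + k) by omega,
        hrefl (j + k) (by omega) hjk]
      have hsign := neg_one_pow_mul_neg_one_pow_of_odd (i := j + k) (j := j) (by
        obtain ⟨r, hr⟩ := hk; exact ⟨j + r, by omega⟩)
      linear_combination (a j * a (j + k) * ε * ε) * hsign - a j * a (j + k) * hεε
    · have h1 := hrefl (n + 1 - j) (by omega) (by omega)
      have h2 := hrefl (n + 1 - k - j) (by omega) (by omega)
      rw [show n + 1 - (n + 1 - j) = j by omega] at h1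
      rw [show n + 1 - (n + 1 - k - j) = j + k by omega] at h2
      rw [h1, h2]
      have hsign := neg_one_pow_mul_neg_one_pow_of_odd (i := n + 1 - j) (j := n + 1 - k - j) (by
        obtain ⟨r, hr⟩ := hk; exact ⟨n - j - r, by omega⟩)
      linear_combination (a (n + 1 - j) * a (n + 1 - k - j) * ε * ε) * hsign
        - a (n + 1 - j) * a (n + 1 - k - j) * hεε
  · omega
  · omega
  · omega

lemma seqEval_tail_eq {R : Type*} [CommRing R] (hM : n = 2 * M)
    (hrefl : ∀ t, 1 ≤ t → t ≤ M → a (n + 1 - t) = ε * (-1) ^ t * a t)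
    {x : R} (hx : x ^ 2 = -1) (hxn : x ^ n = 1) :
    seqEval a (Icc (M + 1) n) x = ε * x * seqEval a (Icc 1 M) x := by
  rw [seqEval, seqEval, mul_sum]
  refine sum_nbij' (fun l => n + 1 - l) (fun u => n + 1 - u) ?_ ?_ ?_ ?_ fun l hl => ?_
  iterate 4 (intro u hu; simp only [mem_Icc] at hu ⊢; omega)
  simp only [mem_Icc] at hl
  have hsign : (-1 : R) ^ (n + 1 - l) * x ^ l = x * x ^ (n + 1 - l) := by
    rw [← hx, ← pow_mul, ← pow_add, show 2 * (n + 1 - l) + l = n + (n + 1 - l + 1) by omega,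
      pow_add, hxn, one_mul, pow_succ']
  have h := hrefl (n + 1 - l) (by omega) (by omega)
  rw [show n + 1 - (n + 1 - l) = l by omega] at h
  rw [h]
  push_cast
  linear_combination (ε : R) * a (n + 1 - l) * hsign

end Reflected

section Gaussian

open Complex

lemma eq_two_of_sum_neg_I_pow_sub_I_pow {M : ℕ} {ε : ℂ} (hεε : ε * ε = 1) (hMe : Even M)
    (hM0 : M ≠ 0) (h : -2 * ε * I * M = ε * (1 - I ^ M) * ∑ k ∈ range M, ((-I) ^ k - I ^ k)) :
    M = 2 := by
  obtain ⟨L, rfl⟩ := hMe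
  have hIM : I ^ (L + L) = (-1) ^ L := by rw [← two_mul, pow_mul, I_sq]
  rw [sum_sub_distrib] at h
  rcases neg_one_pow_eq_or ℂ L with hL | hL <;> rw [hL] at hIM
  · rw [hIM, sub_self, mul_zero, zero_mul] at h
    have : ((L + L : ℕ) : ℂ) = 0 := by
      push_cast at h ⊢
      linear_combination (ε * I / 2) * h + (L + L : ℂ) * ε * ε * I_sq - (L + L : ℂ) * hεε
    exact absurd (by exact_mod_cast this) hM0
  · have hP := geom_sum_mul I (L + L)
    have hQ := geom_sum_mul (-I) (L + L)
    rw [hIM] at hP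
    rw [Even.neg_pow ⟨L, rfl⟩, hIM] at hQ
    set P := ∑ k ∈ range (L + L), I ^ k
    set Q := ∑ k ∈ range (L + L), (-I) ^ k
    have hP' : P = 1 + I := by linear_combination (-(I + 1) / 2) * hP + (P / 2) * I_sq
    have hQ' : Q = 1 - I := by linear_combination ((I - 1) / 2) * hQ + (Q / 2) * I_sq
    rw [hIM, hP', hQ'] at h
    have : ((L + L : ℕ) : ℂ) = 2 := by
      push_cast at h ⊢
      linear_combination (ε * I / 2) * h + ((L + L : ℂ) - 2) * ε * ε * I_sq
        - ((L + L : ℂ) - 2) * hεε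
    exact_mod_cast this

variable {a : ℕ → ℤ} {n M : ℕ} {ε : ℤ}

lemma seqEval_I_mul_seqEval_neg_I (ha : ∀ j ∈ Icc 1 n, IsUnit (a j))
    (hb : ∀ k, 1 ≤ k → k ≤ n - 1 → aperiodicCorr a n k ∈ ({-1, 0, 1} : Set ℤ))
    (hM : n = 2 * M) (hIn : I ^ n = 1) (hε : IsUnit ε)
    (hrefl : ∀ t, 1 ≤ t → t ≤ M → a (n + 1 - t) = ε * (-1) ^ t * a t) :
    seqEval a (Icc 1 M) I * seqEval a (Icc 1 M) (-I) = M := by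
  have hn : Even n := ⟨M, by omega⟩
  have hsplit (x : ℂ) :
      seqEval a (Icc 1 n) x = seqEval a (Icc 1 M) x + seqEval a (Icc (M + 1) n) x :=
    (sum_Icc_add_sum_Icc_succ _ (by omega)).symm
  have hdiag : ∑ j ∈ Icc 1 n, (a j : ℂ) ^ 2 = n := by
    have hsq : ∀ j ∈ Icc 1 n, (a j : ℂ) ^ 2 = 1 := fun j hj => by
      exact_mod_cast Int.isUnit_sq (ha j hj)
    simp [sum_congr rfl hsq]
  have hcross : ∑ k ∈ Icc 1 (n - 1), (aperiodicCorr a n k : ℂ) * (I ^ k + (-I) ^ k) = 0 := by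
    refine sum_eq_zero fun k hk => ?_
    simp only [mem_Icc] at hk
    rcases Nat.even_or_odd k with hk' | hk'
    · rw [aperiodicCorr_eq_zero_of_even ha hb hn hk' hk.1 (by omega), Int.cast_zero, zero_mul]
    · rw [hk'.neg_pow, add_neg_cancel, mul_zero]
  have h := seqEval_mul_seqEval a n (x := I) (y := -I) (by rw [mul_neg, I_mul_I, neg_neg])
  rw [hdiag, hcross, add_zero, hsplit, hsplit, seqEval_tail_eq hM hrefl I_sq hIn,
    seqEval_tail_eq hM hrefl (by rw [neg_sq, I_sq]) (by rw [hn.neg_pow, hIn])] at h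
  have hεε : (ε : ℂ) * ε = 1 := by exact_mod_cast Int.isUnit_mul_self hε
  rw [hM] at h
  push_cast at h
  set BB := seqEval a (Icc 1 M) I * seqEval a (Icc 1 M) (-I)
  linear_combination h / 2 + (BB * ε * ε / 2) * I_sq - (BB / 2) * hεε

lemma sum_aperiodicCorr_mul_neg_I_pow_sub_I_pow (hM : n = 2 * M) (hIn : I ^ n = 1) (hε : IsUnit ε)
    (hrefl : ∀ t, 1 ≤ t → t ≤ M → a (n + 1 - t) = ε * (-1) ^ t * a t) :
    ∑ k ∈ Icc 1 (n - 1), (aperiodicCorr a n k : ℂ) * ((-I) ^ k - I ^ k) =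
      -2 * ε * I * (seqEval a (Icc 1 M) I * seqEval a (Icc 1 M) (-I)) := by
  have hn : Even n := ⟨M, by omega⟩
  have h1 := seqEval_mul_seqEval_tail a (n := n) (M := M) (x := I) (y := -I)
    (by rw [mul_neg, I_mul_I, neg_neg])
  have h2 := seqEval_mul_seqEval_tail a (n := n) (M := M) (x := -I) (y := I)
    (by rw [neg_mul, I_mul_I, neg_neg])
  rw [seqEval_tail_eq hM hrefl (by rw [neg_sq, I_sq]) (by rw [hn.neg_pow, hIn])] at h1
  rw [seqEval_tail_eq hM hrefl I_sq hIn] at h2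
  have hterm : ∀ k ∈ Icc 1 (n - 1), (aperiodicCorr a n k : ℂ) * ((-I) ^ k - I ^ k) =
      crossCorr a n M k * (-I) ^ k - crossCorr a n M k * I ^ k := by
    intro k hk
    simp only [mem_Icc] at hk
    rcases Nat.even_or_odd k with hk' | hk'
    · rw [hk'.neg_pow, sub_self, sub_self, mul_zero]
    · rw [crossCorr_eq_aperiodicCorr hM hε hrefl hk' (by omega), mul_sub]
  rw [sum_congr rfl hterm, sum_sub_distrib, ← h1, ← h2]
  ring

lemma sum_mul_neg_I_pow_sub_I_pow (c : ℕ → ℤ) (hM : n = 2 * M) (hMe : Even M)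
    (hlow : ∀ k, Odd k → k < M → c k = ε) (hhigh : ∀ k, Odd k → M < k → k < n → c k = -ε) :
    ∑ k ∈ Icc 1 (n - 1), (c k : ℂ) * ((-I) ^ k - I ^ k) =
      ε * (1 - I ^ M) * ∑ k ∈ range M, ((-I) ^ k - I ^ k) := by
  have hrange : Icc 1 (n - 1) ⊆ range n := by
    intro k hk
    simp only [mem_Icc, mem_range] at hk ⊢
    omega
  rw [sum_subset hrange fun k hk hk' => by
    simp only [mem_range, mem_Icc] at hk hk'
    rw [show k = 0 by omega, pow_zero, pow_zero, sub_self, mul_zero]]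
  rw [hM, two_mul, sum_range_add, mul_sum, ← sum_add_distrib]
  refine sum_congr rfl fun k hk => ?_
  rw [mem_range] at hk
  rcases Nat.even_or_odd k with hk' | hk'
  · rw [hk'.neg_pow, (hMe.add hk').neg_pow]
    ring
  · have hMk : M < M + k := Nat.lt_add_of_pos_right hk'.pos
    rw [hlow k hk' hk, hhigh (M + k) (hMe.add_odd hk') hMk (by omega), pow_add, pow_add,
      hMe.neg_pow]
    push_cast
    ring

end Gaussian

theorem stmt_5 (n : ℕ) (hn : 4 ≤ n) (hne : Even n) (a : ℕ → ℤ)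
    (ha : ∀ j, 1 ≤ j → j ≤ n → a j = 1 ∨ a j = -1)
    (hbarker : ∀ k, 1 ≤ k → k ≤ n - 1 → aperiodicCorr a n k ∈ ({-1, 0, 1} : Set ℤ))
    (heq : ∀ k, Odd k → 1 ≤ k → k < n / 2 → aperiodicCorr a n k = aperiodicCorr a n 1) :
    n = 4 := by
  obtain ⟨M, hM⟩ : ∃ M, n = 2 * M := ⟨n / 2, by obtain ⟨r, hr⟩ := hne; omega⟩
  have hunit : ∀ j ∈ Icc 1 n, IsUnit (a j) := fun j hj =>
    Int.isUnit_iff.mpr (ha j (mem_Icc.mp hj).1 (mem_Icc.mp hj).2)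
  have h4 : 4 ∣ n := four_dvd_of_even hunit hbarker hne hn
  set ε := aperiodicCorr a n 1
  have hε : IsUnit ε := isUnit_aperiodicCorr_of_odd hunit hbarker hne odd_one (by omega)
  have hlow : ∀ k, Odd k → k < M → aperiodicCorr a n k = ε := fun k hk hkM =>
    heq k hk hk.pos (by omega)
  have hrefl : ∀ t, 1 ≤ t → t ≤ M → a (n + 1 - t) = ε * (-1) ^ t * a t := fun t ht htM =>
    apply_reflect_eq hunit hbarker hM h4 hlow hε ht htM
  have hIn : Complex.I ^ n = 1 := by
    obtain ⟨r, hr⟩ := h4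
    rw [hr, pow_mul, Complex.I_pow_four, one_pow]
  have hMe : Even M := by obtain ⟨r, hr⟩ := h4; exact ⟨r, by omega⟩
  have key := sum_aperiodicCorr_mul_neg_I_pow_sub_I_pow hM hIn hε hrefl
  have hhigh : ∀ k, Odd k → M < k → k < n → aperiodicCorr a n k = -ε := fun k hk hMk hkn =>
    aperiodicCorr_eq_neg_of_odd_of_lt hunit hbarker hM h4 hlow hk hMk hkn.le
  rw [sum_mul_neg_I_pow_sub_I_pow _ hM hMe hlow hhigh,
    seqEval_I_mul_seqEval_neg_I hunit hbarker hM hIn hε hrefl] at key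
  have hM2 := eq_two_of_sum_neg_I_pow_sub_I_pow (by exact_mod_cast Int.isUnit_mul_self hε) hMe
    (by omega) key.symm
  omega
end

section
/- Let a be a binary sequence of even length n = 2m and let 1 ≤ k < m with k odd. Then C_k(a) = δ_{(n−k+1)/2} + Σ_{j=1}^{m−k} a_j a_{j+k} (1 + δ_j δ_{j+k}) + Σ_{j=1}^{(k−1)/2} a_{j+m−k} a_{m+1−j} (δ_{j+m−k} + δ_{m+1−j}), where δ_i = a_i a_{n+1−i}. -/
/-- `δ_i = a_i a_{n+1-i}`. -/
def barkerDelta (a : ℕ → ℤ) (n i : ℕ) : ℤ := a i * a (n + 1 - i)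

/-!
Since `n - k = 2c + 1` is odd, the terms of `C_k` pair off under the reflection `j ↦ n + 1 - k - j`
around the middle index `c + 1`, whose term is `δ_{c+1}`. As every `a_i` squares to `1`, the pair at
`j` equals `a_j a_{j+k} (1 + δ_j δ_{j+k})`, and also `a_j a_{j'} (δ_j + δ_{j'})` with
`j' = n + 1 - k - j`; the first form is used for `j ≤ m - k`, the second for the `(k - 1)/2`
remaining pairs.
-/

open Finset

namespace Finset

variable {M : Type*} [AddCommMonoid M]

theorem sum_Icc_one_add (f : ℕ → M) (p q : ℕ) :
    ∑ j ∈ Icc 1 (p + q), f j = ∑ j ∈ Icc 1 p, f j + ∑ i ∈ Icc 1 q, f (i + p) := by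
  induction q with
  | zero => simp
  | succ q ih =>
    rw [← add_assoc, sum_Icc_succ_top (by omega), ih, sum_Icc_succ_top (by omega), add_assoc,
      show q + 1 + p = p + q + 1 by ring]

theorem sum_Icc_one_odd_eq_add_sum_reflect (f : ℕ → M) {N c : ℕ} (hN : N = 2 * c + 1) :
    ∑ j ∈ Icc 1 N, f j = f (c + 1) + ∑ j ∈ Icc 1 c, (f j + f (N + 1 - j)) := by
  have hupper : ∑ i ∈ Icc 1 c, f (i + (c + 1)) = ∑ j ∈ Icc 1 c, f (N + 1 - j) := by
    refine sum_nbij' (fun i ↦ c + 1 - i) (fun j ↦ c + 1 - j) ?_ ?_ ?_ ?_ ?_ <;>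
      intro i hi <;> rw [mem_Icc] at hi
    all_goals first | (rw [mem_Icc]; omega) | omega | (congr 1; omega)
  rw [show Icc 1 N = Icc 1 ((c + 1) + c) by rw [hN]; ring_nf, sum_Icc_one_add,
    sum_Icc_succ_top (by omega), hupper, sum_add_distrib]
  abel

end Finset

theorem aperiodicCorr_eq_barkerDelta_add_sum_pair (a : ℕ → ℤ) {n k c : ℕ}
    (h : n - k = 2 * c + 1) :
    aperiodicCorr a n k = barkerDelta a n (c + 1) +
      ∑ j ∈ Icc 1 c, (a j * a (j + k) + a (n + 1 - k - j) * a (n + 1 - j)) := by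
  rw [aperiodicCorr, sum_Icc_one_odd_eq_add_sum_reflect _ h, barkerDelta,
    show n + 1 - (c + 1) = c + 1 + k by omega]
  congr 1
  refine sum_congr rfl fun j hj ↦ ?_
  rw [mem_Icc] at hj
  rw [show n - k + 1 - j = n + 1 - k - j by omega, show n + 1 - k - j + k = n + 1 - j by omega]

section PairIdentities

variable {a : ℕ → ℤ} {n k j : ℕ}

theorem pair_eq_mul_one_add_barkerDelta_mul (hj : a j * a j = 1)
    (hjk : a (j + k) * a (j + k) = 1) :
    a j * a (j + k) + a (n + 1 - k - j) * a (n + 1 - j) =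
      a j * a (j + k) * (1 + barkerDelta a n j * barkerDelta a n (j + k)) := by
  rw [barkerDelta, barkerDelta, show n + 1 - (j + k) = n + 1 - k - j by omega]
  linear_combination (-(a (n + 1 - k - j) * a (n + 1 - j))) * hj -
    a j * a j * a (n + 1 - k - j) * a (n + 1 - j) * hjk

theorem pair_eq_mul_barkerDelta_add (hle : j + k ≤ n + 1) (hj : a j * a j = 1)
    (hj' : a (n + 1 - k - j) * a (n + 1 - k - j) = 1) :
    a j * a (j + k) + a (n + 1 - k - j) * a (n + 1 - j) =
      a j * a (n + 1 - k - j) * (barkerDelta a n j + barkerDelta a n (n + 1 - k - j)) := by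
  rw [barkerDelta, barkerDelta, show n + 1 - (n + 1 - k - j) = j + k by omega]
  linear_combination (-(a (n + 1 - k - j) * a (n + 1 - j))) * hj -
    a j * a (j + k) * hj'

end PairIdentities

theorem stmt_14_general (n m : ℕ) (hnm : n = 2 * m) (a : ℕ → ℤ)
    (ha : ∀ j, 1 ≤ j → j ≤ n → a j = 1 ∨ a j = -1)
    (k : ℕ) (hkm : k < m) (hko : Odd k) :
    aperiodicCorr a n k =
      barkerDelta a n ((n - k + 1) / 2) +
      (∑ j ∈ Finset.Icc 1 (m - k),
        a j * a (j + k) * (1 + barkerDelta a n j * barkerDelta a n (j + k))) +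
      ∑ j ∈ Finset.Icc 1 ((k - 1) / 2),
        a (j + m - k) * a (m + 1 - j) *
          (barkerDelta a n (j + m - k) + barkerDelta a n (m + 1 - j)) := by
  have hk := Nat.odd_iff.mp hko
  have hsq : ∀ j, 1 ≤ j → j ≤ n → a j * a j = 1 := fun j h1 h2 ↦ by
    rcases ha j h1 h2 with h | h <;> simp [h]
  rw [aperiodicCorr_eq_barkerDelta_add_sum_pair a (c := m - k + (k - 1) / 2) (by omega),
    sum_Icc_one_add, ← add_assoc, show (n - k + 1) / 2 = m - k + (k - 1) / 2 + 1 by omega]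
  congr 1
  · congr 1
    refine sum_congr rfl fun j hj ↦ ?_
    rw [mem_Icc] at hj
    exact pair_eq_mul_one_add_barkerDelta_mul (hsq j (by omega) (by omega))
      (hsq (j + k) (by omega) (by omega))
  · refine sum_congr rfl fun i hi ↦ ?_
    rw [mem_Icc] at hi
    have hreflect : n + 1 - k - (i + m - k) = m + 1 - i := by omega
    rw [show i + (m - k) = i + m - k by omega, pair_eq_mul_barkerDelta_add (by omega)
      (hsq _ (by omega) (by omega)) (hsq _ (by omega) (by omega)), hreflect]

theorem stmt_14 (n m : ℕ) (hm : 1 ≤ m) (hnm : n = 2 * m) (a : ℕ → ℤ)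
    (ha : ∀ j, 1 ≤ j → j ≤ n → a j = 1 ∨ a j = -1)
    (k : ℕ) (hk1 : 1 ≤ k) (hkm : k < m) (hko : Odd k) :
    aperiodicCorr a n k =
      barkerDelta a n ((n - k + 1) / 2) +
      (∑ j ∈ Finset.Icc 1 (m - k),
        a j * a (j + k) * (1 + barkerDelta a n j * barkerDelta a n (j + k))) +
      ∑ j ∈ Finset.Icc 1 ((k - 1) / 2),
        a (j + m - k) * a (m + 1 - j) *
          (barkerDelta a n (j + m - k) + barkerDelta a n (m + 1 - j)) :=
  stmt_14_general n m hnm a ha k hkm hko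
end

section
/- Let a be a strong symmetric binary sequence of length n = 2m. If k is odd with 1 ≤ k < m, then C_{n−k}(a) = (−1)^{(k+1)/2} + 2 Σ_{j=1}^{(k−1)/2} (−1)^j a_j a_{k+1−j}. -/
open Finset

theorem neg_one_pow_sub_of_even {R : Type*} [Monoid R] [HasDistribNeg R] {p j : ℕ}
    (hp : Even p) (hj : j ≤ p) : (-1 : R) ^ (p - j) = (-1) ^ j :=
  neg_one_pow_congr (by rw [Nat.even_sub hj]; tauto)

theorem sum_Icc_two_mul_add_one_of_symm {M : Type*} [AddCommMonoid M] (f : ℕ → M) (t : ℕ)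
    (hf : ∀ j ∈ Icc 1 t, f (2 * t + 2 - j) = f j) :
    ∑ j ∈ Icc 1 (2 * t + 1), f j = 2 • ∑ j ∈ Icc 1 t, f j + f (t + 1) := by
  have hsplit : Icc 1 (2 * t + 1) = Icc 1 t ∪ insert (t + 1) (Icc (t + 2) (2 * t + 1)) := by
    ext x; simp only [mem_Icc, mem_union, mem_insert]; omega
  have hdisj : Disjoint (Icc 1 t) (insert (t + 1) (Icc (t + 2) (2 * t + 1))) := by
    rw [disjoint_left]; intro x hx hx'; simp only [mem_Icc, mem_insert] at hx hx'; omega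
  have hreflect : ∑ j ∈ Icc (t + 2) (2 * t + 1), f j = ∑ j ∈ Icc 1 t, f j := by
    refine sum_nbij' (fun j => 2 * t + 2 - j) (fun j => 2 * t + 2 - j) ?_ ?_ ?_ ?_ ?_ <;>
      intro x hx <;> simp only [mem_Icc] at hx ⊢
    · omega
    · omega
    · omega
    · omega
    · have h := hf (2 * t + 2 - x) (mem_Icc.mpr (by omega))
      rwa [Nat.sub_sub_self (by omega)] at h
  rw [hsplit, sum_union hdisj, sum_insert (by simp), hreflect, two_nsmul]
  abel

theorem aperiodicCorr_sub (a : ℕ → ℤ) {n k : ℕ} (hk : k ≤ n) :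
    aperiodicCorr a n (n - k) = ∑ j ∈ Icc 1 k, a j * a (j + (n - k)) := by
  rw [aperiodicCorr, Nat.sub_sub_self hk]

theorem apply_succ_sub_of_mul_eq_neg_one_pow {a : ℕ → ℤ} {n i : ℕ}
    (ha : a i = 1 ∨ a i = -1) (hss : a i * a (n + 1 - i) = (-1) ^ i) :
    a (n + 1 - i) = (-1) ^ i * a i := by
  have hsq : a i * a i = 1 := mul_self_eq_one_iff.mpr ha
  linear_combination a i * hss - a (n + 1 - i) * hsq

theorem neg_one_pow_mul_mul_sub_symm {R : Type*} [CommRing R] (a : ℕ → R) {p j : ℕ}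
    (hp : Even p) (hj : j ≤ p) :
    (-1) ^ (p - j) * (a (p - j) * a (p - (p - j))) = (-1) ^ j * (a j * a (p - j)) := by
  rw [neg_one_pow_sub_of_even hp hj, Nat.sub_sub_self hj, mul_comm (a _)]

theorem stmt_16_general (n m : ℕ) (hnm : n = 2 * m) (a : ℕ → ℤ)
    (ha : ∀ j, 1 ≤ j → j ≤ n → a j = 1 ∨ a j = -1)
    -- `a` is strong symmetric:
    (hss : ∀ j, 1 ≤ j → j ≤ n / 2 → a j * a (n + 1 - j) = (-1 : ℤ) ^ j)
    (k : ℕ) (hkm : k < m) (hko : Odd k) :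
    aperiodicCorr a n (n - k) =
      (-1 : ℤ) ^ ((k + 1) / 2) +
      2 * ∑ j ∈ Finset.Icc 1 ((k - 1) / 2), (-1 : ℤ) ^ j * (a j * a (k + 1 - j)) := by
  obtain ⟨t, rfl⟩ := hko
  set f : ℕ → ℤ := fun j => (-1) ^ j * (a j * a (2 * t + 1 + 1 - j))
  have hterm : ∀ j ∈ Icc 1 (2 * t + 1), a j * a (j + (n - (2 * t + 1))) = f j := by
    intro j hj
    rw [mem_Icc] at hj
    have hreflect : j + (n - (2 * t + 1)) = n + 1 - (2 * t + 1 + 1 - j) := by omega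
    rw [hreflect, apply_succ_sub_of_mul_eq_neg_one_pow (ha _ (by omega) (by omega))
      (hss _ (by omega) (by omega)), neg_one_pow_sub_of_even ⟨t + 1, by ring⟩ (by omega)]
    ring
  have hsymm : ∀ j ∈ Icc 1 t, f (2 * t + 2 - j) = f j := fun j hj =>
    neg_one_pow_mul_mul_sub_symm a ⟨t + 1, by ring⟩ (by rw [mem_Icc] at hj; omega)
  have hmid : f (t + 1) = (-1) ^ (t + 1) := by
    simp only [f, show 2 * t + 1 + 1 - (t + 1) = t + 1 by omega,
      mul_self_eq_one_iff.mpr (ha (t + 1) (by omega) (by omega)), mul_one]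
  rw [aperiodicCorr_sub a (by omega), sum_congr rfl hterm,
    sum_Icc_two_mul_add_one_of_symm f t hsymm, hmid, show (2 * t + 1 + 1) / 2 = t + 1 by omega,
    show (2 * t + 1 - 1) / 2 = t by omega, two_nsmul, two_mul]
  ring

theorem stmt_16 (n m : ℕ) (hm : 1 ≤ m) (hnm : n = 2 * m) (a : ℕ → ℤ)
    (ha : ∀ j, 1 ≤ j → j ≤ n → a j = 1 ∨ a j = -1)
    -- `a` is strong symmetric:
    (h4 : 4 ∣ n)
    (hss : ∀ j, 1 ≤ j → j ≤ n / 2 → a j * a (n + 1 - j) = (-1 : ℤ) ^ j)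
    (k : ℕ) (hk1 : 1 ≤ k) (hkm : k < m) (hko : Odd k) :
    aperiodicCorr a n (n - k) =
      (-1 : ℤ) ^ ((k + 1) / 2) +
      2 * ∑ j ∈ Finset.Icc 1 ((k - 1) / 2), (-1 : ℤ) ^ j * (a j * a (k + 1 - j)) :=
  stmt_16_general n m hnm a ha hss k hkm hko
end
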